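/- Let m be odd and let 𝒥 = (J_1,…,J_m) be a cover of I = {1,…,n} satisfying conditions (B1) and (B2). For each k let W^{J_k} have the Gibbs block structure for J_k, let ε ∈ [0,1), and let Ŵ^{J_k} have entries Ŵ^{J_k}_{i,j} = W^{J_k}_{i,j} + ε·1[i ∈ J_k and j ∈ J_k ∪ ∂J_k]. Set 𝒲̂ = 𝒲̂_even·𝒲̂_odd, where 𝒲̂_odd = Ŵ^{J_m}·Ŵ^{J_{m−2}}⋯Ŵ^{J_3}·Ŵ^{J_1} and 𝒲̂_even = Ŵ^{J_{m−1}}·Ŵ^{J_{m−3}}⋯Ŵ^{J_4}·Ŵ^{J_2}. Let J_{−k} = ⋃_{l≠k} J_l, L = max_k |J_k|, λ = max_k max_{i ∈ I∖J_{−k}} (W^{J_k}_{i,∂−J_k} + W^{J_k}_{i,∂+J_k}), and W̄ = max_k max_{i∈J_k} Σ_{j∈∂J_k} W^{J_k}_{i,j} (with the conventions W^{J_1}_{i,∂−J_1} = 0 and W^{J_m}_{i,∂+J_m} = 0). Then the row sums r_i = Σ_j 𝒲̂_{i,j} satisfy: r_i ≤ λ² + ε·(λ(L+4) + ε(L+2)²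 + L·max(1,W̄)) if i ∈ I∖J_{−k} for an even k; r_i ≤ λ + ε·(L+2) if i ∈ I∖J_{−k} for an odd k; and r_i ≤ λ·W̄ + ε·(W̄(L+2) + 2λ + ε(L+2)² + L·max(1,W̄)) if i ∈ J_k ∩ J_{−k} for an even k. -/

import Mathlib

/-!
Two blocks of equal parity are separated by (B2), so the factors of `𝒲̂_odd` (and of
`𝒲̂_even`) touch disjoint sets of rows: row `i` of the product is row `i` of `Ŵ^{J_c}` when `i`
lies in a block `J_c` of that parity, and the identity row otherwise. Hence the row sum of `𝒲̂`
at `i ∈ J_k`, `k` even, is `∑_t Ŵ^{J_k}_{i,t} r_t` with `r` the row sums of `𝒲̂_odd`. On `J_k` the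
weight `Ŵ^{J_k}_{i,t}` is just `ε` and `r_t ≤ max(1, W̄) + ε(L+2)`; a boundary point `t ∈ ∂J_k`
lies in a single, neighbouring and hence odd, block, so `r_t ≤ λ + ε(L+2)`. For odd `k` and
`i ∉ J_{-k}` the row of `𝒲̂_even` is an identity row and only `r_i ≤ λ + ε(L+2)` is needed.
-/

open Finset

/-- The boundary `∂J` of a block `J ⊆ I`: indices outside `J` adjacent to `J`. -/
def bdry {n : ℕ} (J : Finset (Fin n)) : Finset (Fin n) :=
  Finset.univ.filter fun t => t ∉ J ∧ ∃ s ∈ J, ((s : ℕ) = (t : ℕ) + 1 ∨ (t : ℕ) = (s : ℕ) + 1)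

/-- `W` has the Gibbs block structure for block `J`: entries in `[0,1]`, rows outside `J`
are identity rows, and rows in `J` vanish outside `∂J`. -/
def GibbsBlock {n : ℕ} (J : Finset (Fin n)) (W : Matrix (Fin n) (Fin n) ℝ) : Prop :=
  (∀ i j, 0 ≤ W i j ∧ W i j ≤ 1) ∧
  (∀ i, i ∉ J → ∀ j, W i j = if i = j then 1 else 0) ∧
  (∀ i ∈ J, ∀ j, j ∉ bdry J → W i j = 0)

/-- Maximum absolute row sum norm `‖A‖_∞`. -/
noncomputable def rowNorm {n : ℕ} (A : Matrix (Fin n) (Fin n) ℝ) : ℝ :=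
  ⨆ i, ∑ j, |A i j|

/-- The list `[m, m-1, …, 1]`. -/
def descList (m : ℕ) : List ℕ := (List.range m).map fun i => m - i

/-- A block is a (nonempty) integer interval. -/
def IsIntervalBlock {n : ℕ} (J : Finset (Fin n)) : Prop :=
  J.Nonempty ∧ ∀ a ∈ J, ∀ b ∈ J, ∀ c : Fin n, a ≤ c → c ≤ b → c ∈ J

/-- Smallest index of a block (as a natural number). -/
noncomputable def blockMin {n : ℕ} (J : Finset (Fin n)) : ℕ :=
  sInf {t : ℕ | ∃ s ∈ J, (s : ℕ) = t}

/-- Largest index of a block (as a natural number). -/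
def blockMax {n : ℕ} (J : Finset (Fin n)) : ℕ := J.sup fun t => (t : ℕ)

/-- Condition (B1): blocks are intervals, ordered by their min and max elements. -/
def CondB1 {n : ℕ} (m : ℕ) (J : ℕ → Finset (Fin n)) : Prop :=
  (∀ k ∈ Finset.Icc 1 m, IsIntervalBlock (J k)) ∧
  ∀ j k, 1 ≤ j → j < k → k ≤ m →
    blockMin (J j) < blockMin (J k) ∧ blockMax (J j) < blockMax (J k)

/-- Condition (B2): non-consecutive blocks are separated. -/
def CondB2 {n : ℕ} (m : ℕ) (J : ℕ → Finset (Fin n)) : Prop :=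
  ∀ j k, 1 ≤ j → j + 2 ≤ k → k ≤ m → blockMax (J j) + 1 < blockMin (J k)

/-- Matrix entry addressed with integer indices; out-of-range indices give `0`. -/
noncomputable def entryZ {n : ℕ} (A : Matrix (Fin n) (Fin n) ℝ) (i j : ℤ) : ℝ :=
  if hi : 0 ≤ i ∧ i < (n : ℤ) then
    if hj : 0 ≤ j ∧ j < (n : ℤ) then A ⟨i.toNat, by omega⟩ ⟨j.toNat, by omega⟩ else 0
  else 0

/-- `J_{-k} = ⋃_{l ≠ k} J_l`. -/
def Jminus {n : ℕ} (m : ℕ) (J : ℕ → Finset (Fin n)) (k : ℕ) : Finset (Fin n) :=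
  ((Finset.Icc 1 m).erase k).biUnion J

/-- Left boundary entry `W^{J_k}_{i, ∂−J_k}`, with the conventions that it is `0` for the
first block `k = 1` and for nonexistent boundary points. -/
noncomputable def eL {n : ℕ} (m : ℕ) (J : ℕ → Finset (Fin n))
    (W : ℕ → Matrix (Fin n) (Fin n) ℝ) (k : ℕ) (i : Fin n) : ℝ :=
  if k = 1 then 0 else entryZ (W k) (i : ℤ) ((blockMin (J k) : ℤ) - 1)

/-- Right boundary entry `W^{J_k}_{i, ∂+J_k}`, with the conventions that it is `0` for the
last block `k = m` and for nonexistent boundary points. -/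
noncomputable def eR {n : ℕ} (m : ℕ) (J : ℕ → Finset (Fin n))
    (W : ℕ → Matrix (Fin n) (Fin n) ℝ) (k : ℕ) (i : Fin n) : ℝ :=
  if k = m then 0 else entryZ (W k) (i : ℤ) ((blockMax (J k) : ℤ) + 1)

/-- The ε-perturbed matrix `Ŵ^{J_k}`. -/
noncomputable def hatW {n : ℕ} (J : ℕ → Finset (Fin n))
    (W : ℕ → Matrix (Fin n) (Fin n) ℝ) (ε : ℝ) (k : ℕ) : Matrix (Fin n) (Fin n) ℝ :=
  fun i j => W k i j + if i ∈ J k ∧ j ∈ J k ∪ bdry (J k) then ε else 0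

section IntervalBlock

variable {n : ℕ} {J : Finset (Fin n)}

theorem mem_bdry {t : Fin n} :
    t ∈ bdry J ↔ t ∉ J ∧ ∃ s ∈ J, ((s : ℕ) = (t : ℕ) + 1 ∨ (t : ℕ) = (s : ℕ) + 1) := by
  simp [bdry]

theorem disjoint_bdry : Disjoint J (bdry J) :=
  disjoint_left.2 fun _ ht hb => (mem_bdry.1 hb).1 ht

theorem blockMin_le {s : Fin n} (hs : s ∈ J) : blockMin J ≤ s :=
  Nat.sInf_le ⟨s, hs, rfl⟩

theorem le_blockMax {s : Fin n} (hs : s ∈ J) : (s : ℕ) ≤ blockMax J :=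
  le_sup (f := fun t : Fin n => (t : ℕ)) hs

theorem exists_val_eq_blockMin (h : J.Nonempty) : ∃ s ∈ J, (s : ℕ) = blockMin J :=
  Nat.sInf_mem (s := {t : ℕ | ∃ s ∈ J, (s : ℕ) = t}) (h.elim fun a ha => ⟨a, a, ha, rfl⟩)

theorem exists_val_eq_blockMax (h : J.Nonempty) : ∃ s ∈ J, (s : ℕ) = blockMax J :=
  (exists_mem_eq_sup J h fun t => (t : ℕ)).imp fun _ ⟨hs, hv⟩ => ⟨hs, hv.symm⟩

namespace IsIntervalBlock

theorem blockMin_le_blockMax (h : IsIntervalBlock J) : blockMin J ≤ blockMax J := by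
  obtain ⟨s, hs, hv⟩ := exists_val_eq_blockMin h.1
  exact hv ▸ le_blockMax hs

theorem mem_iff (h : IsIntervalBlock J) {t : Fin n} :
    t ∈ J ↔ blockMin J ≤ t ∧ (t : ℕ) ≤ blockMax J := by
  refine ⟨fun ht => ⟨blockMin_le ht, le_blockMax ht⟩, fun ⟨h₁, h₂⟩ => ?_⟩
  obtain ⟨a, ha, hav⟩ := exists_val_eq_blockMin h.1
  obtain ⟨b, hb, hbv⟩ := exists_val_eq_blockMax h.1
  exact h.2 a ha b hb t (Fin.le_def.2 (hav ▸ h₁)) (Fin.le_def.2 (hbv ▸ h₂))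

theorem mem_bdry_iff (h : IsIntervalBlock J) {t : Fin n} :
    t ∈ bdry J ↔ (t : ℕ) + 1 = blockMin J ∨ (t : ℕ) = blockMax J + 1 := by
  rw [mem_bdry, h.mem_iff]
  have := h.blockMin_le_blockMax
  constructor
  · rintro ⟨ht, s, hs, hadj⟩
    have := blockMin_le hs
    have := le_blockMax hs
    omega
  · obtain ⟨a, ha, hav⟩ := exists_val_eq_blockMin h.1
    obtain ⟨b, hb, hbv⟩ := exists_val_eq_blockMax h.1
    rintro (ht | ht)
    · exact ⟨by omega, a, ha, by omega⟩
    · exact ⟨by omega, b, hb, by omega⟩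

theorem card_bdry_le_two (h : IsIntervalBlock J) : #(bdry J) ≤ 2 := by
  refine (card_le_card_of_injOn (fun t : Fin n => (t : ℕ))
    (t := {blockMin J - 1, blockMax J + 1}) (fun t ht => ?_) Fin.val_injective.injOn).trans
    card_le_two
  have := h.mem_bdry_iff.1 ht
  simp only [coe_insert, coe_singleton, Set.mem_insert_iff, Set.mem_singleton_iff]
  omega

end IsIntervalBlock

theorem entryZ_eq_zero_of_out_of_range (A : Matrix (Fin n) (Fin n) ℝ) (i : ℤ) {z : ℤ}
    (hz : ¬(0 ≤ z ∧ z < n)) : entryZ A i z = 0 := by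
  unfold entryZ
  split_ifs <;> rfl

theorem sum_ite_val_eq_entryZ (A : Matrix (Fin n) (Fin n) ℝ) (i : Fin n) (z : ℤ) :
    ∑ t : Fin n, (if ((t : ℕ) : ℤ) = z then A i t else 0) = entryZ A i z := by
  by_cases hz : 0 ≤ z ∧ z < n
  · rw [sum_eq_single ⟨z.toNat, by omega⟩ (fun t _ ht => if_neg fun h => ht (Fin.ext (by
      simp only; omega))) (by simp), if_pos (by simp only; omega), entryZ,
      dif_pos (by omega), dif_pos hz]
    congr
  · rw [entryZ_eq_zero_of_out_of_range A i hz]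
    exact sum_eq_zero fun t _ => if_neg (by omega)

theorem IsIntervalBlock.sum_bdry_eq (h : IsIntervalBlock J) (A : Matrix (Fin n) (Fin n) ℝ)
    (i : Fin n) :
    ∑ t ∈ bdry J, A i t =
      entryZ A i ((blockMin J : ℤ) - 1) + entryZ A i ((blockMax J : ℤ) + 1) := by
  rw [← sum_ite_val_eq_entryZ, ← sum_ite_val_eq_entryZ, ← sum_add_distrib,
    ← sum_subset (subset_univ (bdry J))]
  · refine sum_congr rfl fun t ht => ?_
    have := h.mem_bdry_iff.1 ht
    have := h.blockMin_le_blockMax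
    split_ifs <;> first | omega | simp
  · intro t _ ht
    rw [h.mem_bdry_iff] at ht
    split_ifs <;> first | omega | simp

theorem IsIntervalBlock.sum_bdry_le_two (h : IsIntervalBlock J) {A : Matrix (Fin n) (Fin n) ℝ}
    {i : Fin n} (hA : ∀ j, A i j ≤ 1) : ∑ t ∈ bdry J, A i t ≤ 2 :=
  calc ∑ t ∈ bdry J, A i t ≤ #(bdry J) • (1 : ℝ) := sum_le_card_nsmul _ _ _ fun t _ => hA t
    _ ≤ 2 := by rw [nsmul_one]; exact_mod_cast h.card_bdry_le_two

end IntervalBlock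

structure IsChainCover {n : ℕ} (m : ℕ) (J : ℕ → Finset (Fin n)) : Prop where
  cover : ∀ i : Fin n, ∃ k ∈ Icc 1 m, i ∈ J k
  b1 : CondB1 m J
  b2 : CondB2 m J

section ChainCover

variable {n m : ℕ} {J : ℕ → Finset (Fin n)}

theorem mem_Jminus {k : ℕ} {i : Fin n} :
    i ∈ Jminus m J k ↔ ∃ l ∈ Icc 1 m, l ≠ k ∧ i ∈ J l := by
  simp only [Jminus, mem_biUnion, mem_erase]
  exact ⟨fun ⟨l, ⟨hlk, hl⟩, hi⟩ => ⟨l, hl, hlk, hi⟩, fun ⟨l, hl, hlk, hi⟩ => ⟨l, ⟨hlk, hl⟩, hi⟩⟩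

namespace IsChainCover

theorem isIntervalBlock (hJ : IsChainCover m J) {k : ℕ} (hk : k ∈ Icc 1 m) :
    IsIntervalBlock (J k) :=
  hJ.b1.1 k hk

theorem mem_of_notMem_Jminus (hJ : IsChainCover m J) {k : ℕ} {i : Fin n}
    (hi : i ∉ Jminus m J k) : i ∈ J k := by
  obtain ⟨l, hl, hil⟩ := hJ.cover i
  obtain rfl | hlk := eq_or_ne l k
  · exact hil
  · exact absurd (mem_Jminus.2 ⟨l, hl, hlk, hil⟩) hi

theorem blockMin_one (hJ : IsChainCover m J) (hm : 1 ≤ m) : blockMin (J 1) = 0 := by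
  have h1 : 1 ∈ Icc 1 m := mem_Icc.2 ⟨le_rfl, hm⟩
  obtain ⟨a, -⟩ := (hJ.isIntervalBlock h1).1
  obtain ⟨l, hl, hl0⟩ := hJ.cover ⟨0, a.pos⟩
  have : blockMin (J l) ≤ 0 := blockMin_le hl0
  obtain rfl | hl1 := eq_or_ne l 1
  · omega
  · rw [mem_Icc] at hl
    have := (hJ.b1.2 1 l le_rfl (by omega) hl.2).1
    omega

theorem blockMax_last (hJ : IsChainCover m J) (hm : 1 ≤ m) : blockMax (J m) + 1 = n := by
  have hmm : m ∈ Icc 1 m := mem_Icc.2 ⟨hm, le_rfl⟩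
  obtain ⟨a, -⟩ := (hJ.isIntervalBlock hmm).1
  obtain ⟨l, hl, hln⟩ := hJ.cover ⟨n - 1, Nat.sub_one_lt_of_lt a.isLt⟩
  have : n - 1 ≤ blockMax (J l) := le_blockMax hln
  obtain ⟨b, -, hb⟩ := exists_val_eq_blockMax (hJ.isIntervalBlock hmm).1
  have := b.isLt
  obtain rfl | hlm := eq_or_ne l m
  · omega
  · rw [mem_Icc] at hl
    have := (hJ.b1.2 l m hl.1 (by omega) le_rfl).2
    omega

theorem notMem_of_mem_union_bdry (hJ : IsChainCover m J) {a b : ℕ} (ha : a ∈ Icc 1 m)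
    (hb : b ∈ Icc 1 m) (hab : a % 2 = b % 2) (hne : b ≠ a) {t : Fin n}
    (ht : t ∈ J a ∪ bdry (J a)) : t ∉ J b := by
  intro htb
  have hta : blockMin (J a) ≤ (t : ℕ) + 1 ∧ (t : ℕ) ≤ blockMax (J a) + 1 := by
    rcases mem_union.1 ht with ht | ht
    · have := (hJ.isIntervalBlock ha).mem_iff.1 ht
      omega
    · have := (hJ.isIntervalBlock ha).mem_bdry_iff.1 ht
      have := (hJ.isIntervalBlock ha).blockMin_le_blockMax
      omega
  have htb := (hJ.isIntervalBlock hb).mem_iff.1 htb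
  rw [mem_Icc] at ha hb
  rcases lt_or_gt_of_ne hne with hba | hab'
  · have := hJ.b2 b a hb.1 (by omega) ha.2
    omega
  · have := hJ.b2 a b ha.1 (by omega) hb.2
    omega

theorem parity_ne_of_mem_bdry (hJ : IsChainCover m J) {k l : ℕ} (hk : k ∈ Icc 1 m)
    (hl : l ∈ Icc 1 m) {t : Fin n} (ht : t ∈ bdry (J k)) (htl : t ∈ J l) :
    l % 2 ≠ k % 2 := by
  intro hpar
  have hlk : l ≠ k := by
    rintro rfl
    exact (mem_bdry.1 ht).1 htl
  exact hJ.notMem_of_mem_union_bdry hk hl hpar.symm hlk (mem_union_right _ ht) htl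

theorem exists_notMem_Jminus_of_mem_bdry (hJ : IsChainCover m J) {k : ℕ} (hk : k ∈ Icc 1 m)
    {t : Fin n} (ht : t ∈ bdry (J k)) :
    ∃ l ∈ Icc 1 m, l % 2 ≠ k % 2 ∧ t ∉ Jminus m J l := by
  obtain ⟨l, hl, htl⟩ := hJ.cover t
  have hlk := hJ.parity_ne_of_mem_bdry hk hl ht htl
  refine ⟨l, hl, hlk, fun h => ?_⟩
  obtain ⟨l', hl', hl'l, htl'⟩ := mem_Jminus.1 h
  have := hJ.parity_ne_of_mem_bdry hk hl' ht htl'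
  exact hJ.notMem_of_mem_union_bdry hl hl' (by omega) hl'l (mem_union_left _ htl) htl'

theorem eL_eq (hJ : IsChainCover m J) (W : ℕ → Matrix (Fin n) (Fin n) ℝ) {k : ℕ}
    (hk : k ∈ Icc 1 m) (i : Fin n) :
    eL m J W k i = entryZ (W k) i ((blockMin (J k) : ℤ) - 1) := by
  unfold eL
  split_ifs with hk1
  · subst hk1
    rw [hJ.blockMin_one (mem_Icc.1 hk).2, entryZ_eq_zero_of_out_of_range _ _ (by omega)]
  · rfl

theorem eR_eq (hJ : IsChainCover m J) (W : ℕ → Matrix (Fin n) (Fin n) ℝ) {k : ℕ}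
    (hk : k ∈ Icc 1 m) (i : Fin n) :
    eR m J W k i = entryZ (W k) i ((blockMax (J k) : ℤ) + 1) := by
  unfold eR
  split_ifs with hkm
  · subst hkm
    have := hJ.blockMax_last (mem_Icc.1 hk).1
    rw [entryZ_eq_zero_of_out_of_range _ _ (by omega)]
  · rfl

theorem sum_bdry_eq_eL_add_eR (hJ : IsChainCover m J) (W : ℕ → Matrix (Fin n) (Fin n) ℝ)
    {k : ℕ} (hk : k ∈ Icc 1 m) (i : Fin n) :
    ∑ t ∈ bdry (J k), W k i t = eL m J W k i + eR m J W k i := by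
  rw [hJ.eL_eq W hk, hJ.eR_eq W hk, (hJ.isIntervalBlock hk).sum_bdry_eq]

end IsChainCover

end ChainCover

namespace Matrix

variable {ι ν R : Type*} [Fintype ν] [Semiring R]

theorem sum_mul_apply (A B : Matrix ν ν R) (i : ν) :
    ∑ j, (A * B) i j = ∑ t, A i t * ∑ j, B t j := by
  simp only [mul_apply, Finset.mul_sum]
  exact sum_comm

variable [DecidableEq ν]

theorem mul_row_of_row_eq_single {A B : Matrix ν ν R} {i : ν} (hA : A i = Pi.single i 1) :
    (A * B) i = B i := by
  rw [mul_apply_eq_vecMul, hA, single_one_vecMul]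
  rfl

theorem mul_row_of_rows_eq_single {A B : Matrix ν ν R} {i : ν}
    (hB : ∀ t, A i t ≠ 0 → B t = Pi.single t 1) : (A * B) i = A i := by
  rw [mul_apply_eq_vecMul, vecMul_eq_sum]
  conv_rhs => rw [← Finset.univ_sum_single (A i)]
  refine sum_congr rfl fun t _ => ?_
  by_cases h : A i t = 0
  · simp [h]
  · ext j
    simp [hB t h, Pi.single_apply]

theorem list_prod_row_eq_single {l : List ι} {M : ι → Matrix ν ν R} {i : ν}
    (h : ∀ c ∈ l, M c i = Pi.single i 1) : (l.map M).prod i = Pi.single i 1 := by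
  induction l with
  | nil =>
    ext j
    simp [one_apply, Pi.single_apply, eq_comm]
  | cons d l ih =>
    rw [List.map_cons, List.prod_cons, mul_row_of_row_eq_single (h d List.mem_cons_self)]
    exact ih fun c hc => h c (List.mem_cons_of_mem d hc)

theorem list_prod_row_eq_of_nodup {l : List ι} (hl : l.Nodup) {M : ι → Matrix ν ν R} {c : ι}
    (hc : c ∈ l) {i : ν}
    (h : ∀ c' ∈ l, c' ≠ c → M c' i = Pi.single i 1 ∧ ∀ t, M c i t ≠ 0 → M c' t = Pi.single t 1) :
    (l.map M).prod i = M c i := by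
  induction l with
  | nil => simp at hc
  | cons d l ih =>
    obtain ⟨hdl, hl⟩ := List.nodup_cons.1 hl
    rw [List.map_cons, List.prod_cons]
    by_cases hdc : d = c
    · subst hdc
      exact mul_row_of_rows_eq_single fun t ht => list_prod_row_eq_single fun c' hc' =>
        (h c' (List.mem_cons_of_mem d hc') (ne_of_mem_of_not_mem hc' hdl)).2 t ht
    · rw [mul_row_of_row_eq_single (h d List.mem_cons_self hdc).1]
      exact ih hl ((List.mem_cons.1 hc).resolve_left (Ne.symm hdc))
        fun c' hc' => h c' (List.mem_cons_of_mem d hc')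

end Matrix

section PerturbedBlock

variable {n : ℕ} {J : ℕ → Finset (Fin n)} {W : ℕ → Matrix (Fin n) (Fin n) ℝ} {ε : ℝ} {k : ℕ}
  {i j : Fin n}

theorem hatW_row_of_notMem (hW : GibbsBlock (J k) (W k)) (hi : i ∉ J k) :
    hatW J W ε k i = Pi.single i 1 := by
  ext j
  simp [hatW, hi, hW.2.1 i hi j, Pi.single_apply, eq_comm]

theorem hatW_eq_zero (hW : GibbsBlock (J k) (W k)) (hi : i ∈ J k)
    (hj : j ∉ J k ∪ bdry (J k)) : hatW J W ε k i j = 0 := by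
  rw [hatW, hW.2.2 i hi j fun h => hj (mem_union_right _ h), if_neg fun h => hj h.2, add_zero]

theorem hatW_of_mem (hW : GibbsBlock (J k) (W k)) (hi : i ∈ J k) (hj : j ∈ J k) :
    hatW J W ε k i j = ε := by
  rw [hatW, hW.2.2 i hi j fun h => (mem_bdry.1 h).1 hj, if_pos ⟨hi, mem_union_left _ hj⟩,
    zero_add]

theorem hatW_of_mem_bdry (hi : i ∈ J k) (hj : j ∈ bdry (J k)) :
    hatW J W ε k i j = W k i j + ε := by
  rw [hatW, if_pos ⟨hi, mem_union_right _ hj⟩]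

theorem hatW_nonneg (hW : GibbsBlock (J k) (W k)) (hε : 0 ≤ ε) (i j : Fin n) :
    0 ≤ hatW J W ε k i j := by
  unfold hatW
  have := (hW.1 i j).1
  split_ifs <;> linarith

theorem sum_hatW_mul (hW : GibbsBlock (J k) (W k)) (hi : i ∈ J k) (f : Fin n → ℝ) :
    ∑ t, hatW J W ε k i t * f t =
      ∑ t ∈ J k, ε * f t + ∑ t ∈ bdry (J k), (W k i t + ε) * f t := by
  rw [← sum_subset (subset_univ (J k ∪ bdry (J k)))
      fun t _ ht => by rw [hatW_eq_zero hW hi ht, zero_mul],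
    sum_union disjoint_bdry]
  congr 1
  · exact sum_congr rfl fun t ht => by rw [hatW_of_mem hW hi ht]
  · exact sum_congr rfl fun t ht => by rw [hatW_of_mem_bdry hi ht]

theorem sum_hatW (hW : GibbsBlock (J k) (W k)) (hi : i ∈ J k) :
    ∑ t, hatW J W ε k i t = ∑ t ∈ bdry (J k), W k i t + ε * (#(J k) + #(bdry (J k))) := by
  simpa [sum_add_distrib, mul_add, add_comm, add_left_comm, mul_comm] using
    sum_hatW_mul (ε := ε) hW hi fun _ => 1

end PerturbedBlock

section ParityProduct

variable {n m : ℕ} {J : ℕ → Finset (Fin n)} {W : ℕ → Matrix (Fin n) (Fin n) ℝ} {ε : ℝ}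

/-- `𝒲̂_even = parityProd J W ε m 0` and `𝒲̂_odd = parityProd J W ε m 1`. -/
noncomputable def parityProd (J : ℕ → Finset (Fin n)) (W : ℕ → Matrix (Fin n) (Fin n) ℝ)
    (ε : ℝ) (m r : ℕ) : Matrix (Fin n) (Fin n) ℝ :=
  (((descList m).filter fun l => l % 2 = r).map (hatW J W ε)).prod

theorem mem_filter_descList {r c : ℕ} :
    c ∈ (descList m).filter (fun l => l % 2 = r) ↔ c ∈ Icc 1 m ∧ c % 2 = r := by
  simp only [List.mem_filter, descList, List.mem_map, List.mem_range, mem_Icc,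
    decide_eq_true_eq]
  constructor
  · rintro ⟨⟨i, hi, rfl⟩, hr⟩
    exact ⟨by omega, hr⟩
  · rintro ⟨hc, hr⟩
    exact ⟨⟨m - c, by omega, by omega⟩, hr⟩

theorem nodup_filter_descList (r : ℕ) : ((descList m).filter fun l => l % 2 = r).Nodup :=
  ((List.nodup_range).map_on fun a ha b hb h => by
    simp only [List.mem_range] at ha hb
    omega).filter _

theorem parityProd_row_of_mem (hJ : IsChainCover m J)
    (hW : ∀ k ∈ Icc 1 m, GibbsBlock (J k) (W k)) {c : ℕ} (hc : c ∈ Icc 1 m) {i : Fin n}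
    (hi : i ∈ J c) : parityProd J W ε m (c % 2) i = hatW J W ε c i := by
  refine Matrix.list_prod_row_eq_of_nodup (nodup_filter_descList _)
    (mem_filter_descList.2 ⟨hc, rfl⟩) fun c' hc' hne => ?_
  obtain ⟨hc'm, hpar⟩ := mem_filter_descList.1 hc'
  have hsep : ∀ t, t ∈ J c ∪ bdry (J c) → t ∉ J c' := fun _ =>
    hJ.notMem_of_mem_union_bdry hc hc'm hpar.symm hne
  refine ⟨hatW_row_of_notMem (hW c' hc'm) (hsep i (mem_union_left _ hi)), fun t ht => ?_⟩
  refine hatW_row_of_notMem (hW c' hc'm) (hsep t ?_)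
  by_contra h
  exact ht (hatW_eq_zero (hW c hc) hi h)

theorem parityProd_row_of_forall_notMem (hW : ∀ k ∈ Icc 1 m, GibbsBlock (J k) (W k))
    {r : ℕ} {i : Fin n} (hi : ∀ c ∈ Icc 1 m, c % 2 = r → i ∉ J c) :
    parityProd J W ε m r i = Pi.single i 1 :=
  Matrix.list_prod_row_eq_single fun c hc =>
    have ⟨hcm, hr⟩ := mem_filter_descList.1 hc
    hatW_row_of_notMem (hW c hcm) (hi c hcm hr)

theorem sum_parityProd_of_mem (hJ : IsChainCover m J)
    (hW : ∀ k ∈ Icc 1 m, GibbsBlock (J k) (W k)) {c : ℕ} (hc : c ∈ Icc 1 m) {i : Fin n}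
    (hi : i ∈ J c) :
    ∑ j, parityProd J W ε m (c % 2) i j =
      ∑ t ∈ bdry (J c), W c i t + ε * (#(J c) + #(bdry (J c))) := by
  rw [parityProd_row_of_mem hJ hW hc hi, sum_hatW (hW c hc) hi]

theorem parityProd_nonneg (hW : ∀ k ∈ Icc 1 m, GibbsBlock (J k) (W k)) (hε : 0 ≤ ε)
    (r : ℕ) (i j : Fin n) : 0 ≤ parityProd J W ε m r i j := by
  refine List.prod_induction (fun A : Matrix (Fin n) (Fin n) ℝ => ∀ i j, 0 ≤ A i j)
    (fun A B hA hB i j => by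
      rw [Matrix.mul_apply]
      exact sum_nonneg fun t _ => mul_nonneg (hA i t) (hB t j))
    (fun i j => by rw [Matrix.one_apply]; split_ifs <;> norm_num) (fun A hA => ?_) i j
  obtain ⟨c, hc, rfl⟩ := List.mem_map.1 hA
  exact hatW_nonneg (hW c (mem_filter_descList.1 hc).1) hε

end ParityProduct

section RowSums

variable {n m : ℕ} {J : ℕ → Finset (Fin n)} {W : ℕ → Matrix (Fin n) (Fin n) ℝ}
  {ε lam Wbar L : ℝ}

theorem sum_parityProd_le_of_notMem_Jminus (hJ : IsChainCover m J)
    (hW : ∀ k ∈ Icc 1 m, GibbsBlock (J k) (W k)) (hε : 0 ≤ ε)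
    (hlam : ∀ k ∈ Icc 1 m, ∀ i, i ∉ Jminus m J k → ∑ t ∈ bdry (J k), W k i t ≤ lam)
    (hL : ∀ k ∈ Icc 1 m, (#(J k) : ℝ) ≤ L) {k : ℕ} (hk : k ∈ Icc 1 m) {i : Fin n}
    (hi : i ∉ Jminus m J k) :
    ∑ j, parityProd J W ε m (k % 2) i j ≤ lam + ε * (L + 2) := by
  rw [sum_parityProd_of_mem hJ hW hk (hJ.mem_of_notMem_Jminus hi)]
  have : (#(bdry (J k)) : ℝ) ≤ 2 := by exact_mod_cast (hJ.isIntervalBlock hk).card_bdry_le_two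
  gcongr
  · exact hlam k hk i hi
  · exact hL k hk

theorem sum_parityProd_le (hJ : IsChainCover m J)
    (hW : ∀ k ∈ Icc 1 m, GibbsBlock (J k) (W k)) (hε : 0 ≤ ε)
    (hWbar : ∀ k ∈ Icc 1 m, ∀ i ∈ J k, ∑ t ∈ bdry (J k), W k i t ≤ Wbar)
    (hL : ∀ k ∈ Icc 1 m, (#(J k) : ℝ) ≤ L) (r : ℕ) (t : Fin n) :
    ∑ j, parityProd J W ε m r t j ≤ max 1 Wbar + ε * (L + 2) := by
  by_cases ht : ∃ c ∈ Icc 1 m, c % 2 = r ∧ t ∈ J c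
  · obtain ⟨c, hc, rfl, htc⟩ := ht
    rw [sum_parityProd_of_mem hJ hW hc htc]
    have : (#(bdry (J c)) : ℝ) ≤ 2 := by
      exact_mod_cast (hJ.isIntervalBlock hc).card_bdry_le_two
    gcongr
    · exact (hWbar c hc t htc).trans (le_max_right _ _)
    · exact hL c hc
  · obtain ⟨c, hc, -⟩ := hJ.cover t
    have : 0 ≤ L := (Nat.cast_nonneg _).trans (hL c hc)
    rw [parityProd_row_of_forall_notMem hW fun c hc hr htc => ht ⟨c, hc, hr, htc⟩, sum_pi_single', if_pos (mem_univ t)]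
    exact le_add_of_le_of_nonneg (le_max_left _ _) (by positivity)

theorem sum_mul_parityProd_le_of_odd (hJ : IsChainCover m J)
    (hW : ∀ k ∈ Icc 1 m, GibbsBlock (J k) (W k)) (hε : 0 ≤ ε)
    (hlam : ∀ k ∈ Icc 1 m, ∀ i, i ∉ Jminus m J k → ∑ t ∈ bdry (J k), W k i t ≤ lam)
    (hL : ∀ k ∈ Icc 1 m, (#(J k) : ℝ) ≤ L) {k : ℕ} (hk : k ∈ Icc 1 m) (hk1 : k % 2 = 1)
    {i : Fin n} (hi : i ∉ Jminus m J k) :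
    ∑ j, (parityProd J W ε m 0 * parityProd J W ε m 1) i j ≤ lam + ε * (L + 2) := by
  have hrow : parityProd J W ε m 0 i = Pi.single i 1 :=
    parityProd_row_of_forall_notMem hW fun c hc hc0 hic =>
      hi (mem_Jminus.2 ⟨c, hc, by omega, hic⟩)
  rw [Matrix.mul_row_of_row_eq_single hrow]
  simpa only [hk1] using sum_parityProd_le_of_notMem_Jminus hJ hW hε hlam hL hk hi

theorem sum_mul_parityProd_le_of_even (hJ : IsChainCover m J)
    (hW : ∀ k ∈ Icc 1 m, GibbsBlock (J k) (W k)) (hε : 0 ≤ ε) (hlam0 : 0 ≤ lam)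
    (hlam : ∀ k ∈ Icc 1 m, ∀ i, i ∉ Jminus m J k → ∑ t ∈ bdry (J k), W k i t ≤ lam)
    (hWbar : ∀ k ∈ Icc 1 m, ∀ i ∈ J k, ∑ t ∈ bdry (J k), W k i t ≤ Wbar)
    (hL : ∀ k ∈ Icc 1 m, (#(J k) : ℝ) ≤ L) {k : ℕ} (hk : k ∈ Icc 1 m) (hk0 : k % 2 = 0)
    {i : Fin n} (hi : i ∈ J k) {X : ℝ} (hX : ∑ t ∈ bdry (J k), W k i t ≤ X) :
    ∑ j, (parityProd J W ε m 0 * parityProd J W ε m 1) i j ≤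
      (X + 2 * ε) * (lam + ε * (L + 2)) + L * (ε * (max 1 Wbar + ε * (L + 2))) := by
  have hL0 : 0 ≤ L := (Nat.cast_nonneg _).trans (hL k hk)
  have hrow : parityProd J W ε m 0 i = hatW J W ε k i := hk0 ▸ parityProd_row_of_mem hJ hW hk hi
  rw [Matrix.sum_mul_apply, hrow, sum_hatW_mul (hW k hk) hi]
  have hinterior : ∑ t ∈ J k, ε * ∑ j, parityProd J W ε m 1 t j ≤
      L * (ε * (max 1 Wbar + ε * (L + 2))) :=
    calc _ ≤ ∑ t ∈ J k, ε * (max 1 Wbar + ε * (L + 2)) := sum_le_sum fun t _ =>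
          mul_le_mul_of_nonneg_left (sum_parityProd_le hJ hW hε hWbar hL 1 t) hε
      _ = #(J k) * (ε * (max 1 Wbar + ε * (L + 2))) := by rw [sum_const, nsmul_eq_mul]
      _ ≤ _ := mul_le_mul_of_nonneg_right (hL k hk) (by positivity)
  have hbdry : ∑ t ∈ bdry (J k), (W k i t + ε) * ∑ j, parityProd J W ε m 1 t j ≤
      (X + 2 * ε) * (lam + ε * (L + 2)) := by
    have hcard : (#(bdry (J k)) : ℝ) ≤ 2 := by
      exact_mod_cast (hJ.isIntervalBlock hk).card_bdry_le_two
    calc _ ≤ ∑ t ∈ bdry (J k), (W k i t + ε) * (lam + ε * (L + 2)) := by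
          refine sum_le_sum fun t ht => mul_le_mul_of_nonneg_left ?_
            (add_nonneg ((hW k hk).1 i t).1 hε)
          obtain ⟨l, hl, hlk, htl⟩ := hJ.exists_notMem_Jminus_of_mem_bdry hk ht
          have hl1 : l % 2 = 1 := by omega
          simpa only [hl1] using sum_parityProd_le_of_notMem_Jminus hJ hW hε hlam hL hl htl
      _ = (∑ t ∈ bdry (J k), W k i t + #(bdry (J k)) * ε) * (lam + ε * (L + 2)) := by
          rw [← sum_mul, sum_add_distrib, sum_const, nsmul_eq_mul]
      _ ≤ _ := mul_le_mul_of_nonneg_right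
          (add_le_add hX (mul_le_mul_of_nonneg_right hcard hε)) (by positivity)
  linarith

end RowSums

theorem IsChainCover.sum_bdry_le_sSup_eL_add_eR {n m : ℕ} {J : ℕ → Finset (Fin n)}
    {W : ℕ → Matrix (Fin n) (Fin n) ℝ} (hJ : IsChainCover m J)
    (hW : ∀ k ∈ Icc 1 m, GibbsBlock (J k) (W k)) {k : ℕ} (hk : k ∈ Icc 1 m) {i : Fin n}
    (hi : i ∉ Jminus m J k) :
    ∑ t ∈ bdry (J k), W k i t ≤ sSup {x : ℝ | ∃ k ∈ Icc 1 m, ∃ i : Fin n,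
      i ∉ Jminus m J k ∧ x = eL m J W k i + eR m J W k i} := by
  refine le_csSup ⟨2, ?_⟩ ⟨k, hk, i, hi, hJ.sum_bdry_eq_eL_add_eR W hk i⟩
  rintro _ ⟨k, hk, i, -, rfl⟩
  rw [← hJ.sum_bdry_eq_eL_add_eR W hk i]
  exact (hJ.isIntervalBlock hk).sum_bdry_le_two fun j => ((hW k hk).1 i j).2

theorem IsChainCover.sum_bdry_le_sSup {n m : ℕ} {J : ℕ → Finset (Fin n)}
    {W : ℕ → Matrix (Fin n) (Fin n) ℝ} (hJ : IsChainCover m J)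
    (hW : ∀ k ∈ Icc 1 m, GibbsBlock (J k) (W k)) {k : ℕ} (hk : k ∈ Icc 1 m) {i : Fin n}
    (hi : i ∈ J k) :
    ∑ t ∈ bdry (J k), W k i t ≤ sSup {x : ℝ | ∃ k ∈ Icc 1 m, ∃ i ∈ J k,
      x = ∑ j ∈ bdry (J k), W k i j} := by
  refine le_csSup ⟨2, ?_⟩ ⟨k, hk, i, hi, rfl⟩
  rintro _ ⟨k, hk, i, -, rfl⟩
  exact (hJ.isIntervalBlock hk).sum_bdry_le_two fun j => ((hW k hk).1 i j).2

theorem stmt6_general {n m : ℕ}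
    (J : ℕ → Finset (Fin n)) (W : ℕ → Matrix (Fin n) (Fin n) ℝ)
    (hcover : ∀ i : Fin n, ∃ k ∈ Finset.Icc 1 m, i ∈ J k)
    (hB1 : CondB1 m J) (hB2 : CondB2 m J)
    (hblock : ∀ k ∈ Finset.Icc 1 m, GibbsBlock (J k) (W k))
    (ε : ℝ) (hε0 : 0 ≤ ε)
    (lam Wbar : ℝ) (L : ℕ)
    (hlam : lam = sSup {x : ℝ | ∃ k ∈ Finset.Icc 1 m, ∃ i : Fin n,
      i ∉ Jminus m J k ∧ x = eL m J W k i + eR m J W k i})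
    (hWbar : Wbar = sSup {x : ℝ | ∃ k ∈ Finset.Icc 1 m, ∃ i ∈ J k,
      x = ∑ j ∈ bdry (J k), W k i j})
    (hL : L = (Finset.Icc 1 m).sup fun k => (J k).card) :
    (∀ k ∈ Finset.Icc 1 m, k % 2 = 0 → ∀ i : Fin n, i ∉ Jminus m J k →
      ∑ j, (((((descList m).filter fun l => l % 2 = 0).map (hatW J W ε)).prod) *
          ((((descList m).filter fun l => l % 2 = 1).map (hatW J W ε)).prod)) i j ≤
        lam ^ 2 + ε * (lam * ((L : ℝ) + 4) + ε * ((L : ℝ) + 2) ^ 2 + (L : ℝ) * max 1 Wbar)) ∧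
    (∀ k ∈ Finset.Icc 1 m, k % 2 = 1 → ∀ i : Fin n, i ∉ Jminus m J k →
      ∑ j, (((((descList m).filter fun l => l % 2 = 0).map (hatW J W ε)).prod) *
          ((((descList m).filter fun l => l % 2 = 1).map (hatW J W ε)).prod)) i j ≤
        lam + ε * ((L : ℝ) + 2)) ∧
    (∀ k ∈ Finset.Icc 1 m, k % 2 = 0 → ∀ i ∈ J k, i ∈ Jminus m J k →
      ∑ j, (((((descList m).filter fun l => l % 2 = 0).map (hatW J W ε)).prod) *
          ((((descList m).filter fun l => l % 2 = 1).map (hatW J W ε)).prod)) i j ≤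
        lam * Wbar + ε * (Wbar * ((L : ℝ) + 2) + 2 * lam + ε * ((L : ℝ) + 2) ^ 2 +
          (L : ℝ) * max 1 Wbar)) := by
  have hJ : IsChainCover m J := ⟨hcover, hB1, hB2⟩
  have hlam0 : 0 ≤ lam := hlam ▸ Real.sSup_nonneg (by
    rintro _ ⟨k, hk, i, -, rfl⟩
    rw [← hJ.sum_bdry_eq_eL_add_eR W hk i]
    exact sum_nonneg fun t _ => ((hblock k hk).1 i t).1)
  have hlam_ge : ∀ k ∈ Icc 1 m, ∀ i, i ∉ Jminus m J k → ∑ t ∈ bdry (J k), W k i t ≤ lam :=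
    fun k hk i hi => hlam ▸ hJ.sum_bdry_le_sSup_eL_add_eR hblock hk hi
  have hWbar_ge : ∀ k ∈ Icc 1 m, ∀ i ∈ J k, ∑ t ∈ bdry (J k), W k i t ≤ Wbar :=
    fun k hk i hi => hWbar ▸ hJ.sum_bdry_le_sSup hblock hk hi
  have hL_ge : ∀ k ∈ Icc 1 m, (#(J k) : ℝ) ≤ L := fun k hk => by
    rw [hL]
    exact_mod_cast le_sup (f := fun k => #(J k)) hk
  refine ⟨fun k hk hk0 i hi => ?_, fun k hk hk1 i hi => ?_, fun k hk hk0 i hik _ => ?_⟩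
  · refine (sum_mul_parityProd_le_of_even hJ hblock hε0 hlam0 hlam_ge hWbar_ge hL_ge hk hk0
      (hJ.mem_of_notMem_Jminus hi) (hlam_ge k hk i hi)).trans_eq ?_
    ring
  · exact sum_mul_parityProd_le_of_odd hJ hblock hε0 hlam_ge hL_ge hk hk1 hi
  · refine (sum_mul_parityProd_le_of_even hJ hblock hε0 hlam0 hlam_ge hWbar_ge hL_ge hk hk0
      hik (hWbar_ge k hk i hik)).trans_eq ?_
    ring

theorem stmt6 {n m : ℕ} (hn : 1 ≤ n) (hm : 1 ≤ m) (hmodd : m % 2 = 1)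
    (J : ℕ → Finset (Fin n)) (W : ℕ → Matrix (Fin n) (Fin n) ℝ)
    (hcover : ∀ i : Fin n, ∃ k ∈ Finset.Icc 1 m, i ∈ J k)
    (hB1 : CondB1 m J) (hB2 : CondB2 m J)
    (hblock : ∀ k ∈ Finset.Icc 1 m, GibbsBlock (J k) (W k))
    (ε : ℝ) (hε0 : 0 ≤ ε) (hε1 : ε < 1)
    (lam Wbar : ℝ) (L : ℕ)
    (hlam : lam = sSup {x : ℝ | ∃ k ∈ Finset.Icc 1 m, ∃ i : Fin n,
      i ∉ Jminus m J k ∧ x = eL m J W k i + eR m J W k i})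
    (hWbar : Wbar = sSup {x : ℝ | ∃ k ∈ Finset.Icc 1 m, ∃ i ∈ J k,
      x = ∑ j ∈ bdry (J k), W k i j})
    (hL : L = (Finset.Icc 1 m).sup fun k => (J k).card) :
    (∀ k ∈ Finset.Icc 1 m, k % 2 = 0 → ∀ i : Fin n, i ∉ Jminus m J k →
      ∑ j, (((((descList m).filter fun l => l % 2 = 0).map (hatW J W ε)).prod) *
          ((((descList m).filter fun l => l % 2 = 1).map (hatW J W ε)).prod)) i j ≤
        lam ^ 2 + ε * (lam * ((L : ℝ) + 4) + ε * ((L : ℝ) + 2) ^ 2 + (L : ℝ) * max 1 Wbar)) ∧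
    (∀ k ∈ Finset.Icc 1 m, k % 2 = 1 → ∀ i : Fin n, i ∉ Jminus m J k →
      ∑ j, (((((descList m).filter fun l => l % 2 = 0).map (hatW J W ε)).prod) *
          ((((descList m).filter fun l => l % 2 = 1).map (hatW J W ε)).prod)) i j ≤
        lam + ε * ((L : ℝ) + 2)) ∧
    (∀ k ∈ Finset.Icc 1 m, k % 2 = 0 → ∀ i ∈ J k, i ∈ Jminus m J k →
      ∑ j, (((((descList m).filter fun l => l % 2 = 0).map (hatW J W ε)).prod) *
          ((((descList m).filter fun l => l % 2 = 1).map (hatW J W ε)).prod)) i j ≤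
        lam * Wbar + ε * (Wbar * ((L : ℝ) + 2) + 2 * lam + ε * ((L : ℝ) + 2) ^ 2 +
          (L : ℝ) * max 1 Wbar)) :=
  stmt6_general J W hcover hB1 hB2 hblock ε hε0 lam Wbar L hlam hWbar hL
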